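/- A sequence (X_n, d_n, μ_n) of mm-spaces is a Lévy family (i.e. α_{X_n}(ε) → 0 as n → ∞ for every ε > 0) if and only if sep_κ(X_n) → 0 as n → ∞ for every κ with 0 < κ ≤ 1/2. -/

import Mathlib

/-!
If `α(ε) < κ`, every set of mass `≥ κ` has an `ε`-thickening of mass `≥ 1/2` (otherwise the
complement of that thickening has mass `> 1/2`, yet its `ε`-thickening misses the set), hence a
`2ε`-thickening of mass `> 1 - κ`, which meets every other set of mass `≥ κ`; so `sep_κ ≤ 2ε`.
Conversely, if `sep_κ < ε` and `μ(A) ≥ 1/2 ≥ κ`, then `A` and `X \ A_ε` are `ε`-apart, so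
`μ(X \ A_ε) < κ`; so `α(ε) ≤ κ`.
-/

open MeasureTheory Metric Filter

/-- The concentration function of an mm-space `(X, d, μ)`:
`α_X(ε) = 1 − inf{ μ(A_ε) : A Borel, μ(A) ≥ 1/2 }`, where `A_ε` is the
open `ε`-thickening of `A`. -/
noncomputable def concFn {X : Type*} [PseudoMetricSpace X] [MeasurableSpace X]
    (μ : Measure X) (ε : ℝ) : ℝ :=
  1 - sInf {r : ℝ | ∃ A : Set X, MeasurableSet A ∧ 1 / 2 ≤ (μ A).toReal ∧
      r = (μ (Metric.thickening ε A)).toReal}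

/-- The `κ`-separation distance of an mm-space `(X, d, μ)`:
`sep_κ(X) = sup{δ ≥ 0 : ∃ Borel A, B with μ(A) ≥ κ, μ(B) ≥ κ and
d(a,b) ≥ δ for all a ∈ A, b ∈ B}`. -/
noncomputable def sepDist {X : Type*} [PseudoMetricSpace X] [MeasurableSpace X]
    (μ : Measure X) (κ : ℝ) : ℝ :=
  sSup {δ : ℝ | 0 ≤ δ ∧ ∃ A B : Set X, MeasurableSet A ∧ MeasurableSet B ∧
      κ ≤ (μ A).toReal ∧ κ ≤ (μ B).toReal ∧ ∀ a ∈ A, ∀ b ∈ B, δ ≤ dist a b}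

open Set in
theorem nonempty_inter_of_one_lt_measureReal_add {α : Type*} [MeasurableSpace α]
    {μ : Measure α} [IsProbabilityMeasure μ] {s t : Set α} (ht : MeasurableSet t)
    (h : 1 < μ.real s + μ.real t) : (s ∩ t).Nonempty := by
  rw [← not_disjoint_iff_nonempty_inter]
  intro hst
  linarith [measureReal_union hst ht (measure_ne_top μ s),
    measureReal_le_one (μ := μ) (s := s ∪ t)]

section MMSpace

variable {X : Type*} [PseudoMetricSpace X] [MeasurableSpace X] {μ : Measure X} {κ ε : ℝ}

theorem exists_lt_measureReal_closedBall [IsProbabilityMeasure μ] {c : ℝ} (hc : c < 1) :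
    ∃ x R, c < μ.real (closedBall x R) := by
  obtain ⟨x⟩ := nonempty_of_isProbabilityMeasure μ
  have hmono : Monotone fun n : ℕ => closedBall x n := fun m n hmn =>
    closedBall_subset_closedBall (by exact_mod_cast hmn)
  have hlim := tendsto_measure_iUnion_atTop (μ := μ) hmono
  rw [iUnion_closedBall_nat, measure_univ] at hlim
  have hlim' := (ENNReal.tendsto_toReal ENNReal.one_ne_top).comp hlim
  obtain ⟨n, hn⟩ := (hlim'.eventually_const_lt (by simpa using hc)).exists
  exact ⟨x, n, hn⟩

theorem one_sub_measureReal_thickening_le_concFn {A : Set X} (hA : MeasurableSet A)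
    (hμA : 1 / 2 ≤ μ.real A) : 1 - μ.real (thickening ε A) ≤ concFn μ ε := by
  rw [concFn]
  refine sub_le_sub_left (csInf_le ?_ ?_) 1
  · exact ⟨0, by rintro r ⟨A, -, -, rfl⟩; exact measureReal_nonneg⟩
  · exact ⟨A, hA, hμA, rfl⟩

theorem concFn_nonneg [IsProbabilityMeasure μ] : 0 ≤ concFn μ ε := by
  have h := one_sub_measureReal_thickening_le_concFn (μ := μ) (ε := ε) MeasurableSet.univ
    (by norm_num)
  linarith [measureReal_le_one (μ := μ) (s := thickening ε Set.univ)]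

theorem one_sub_lt_measureReal_thickening (hconc : concFn μ ε < κ) {A : Set X}
    (hA : MeasurableSet A) (hμA : 1 / 2 ≤ μ.real A) : 1 - κ < μ.real (thickening ε A) := by
  linarith [one_sub_measureReal_thickening_le_concFn (ε := ε) hA hμA]

theorem concFn_le_of_forall [IsProbabilityMeasure μ]
    (h : ∀ A, MeasurableSet A → 1 / 2 ≤ μ.real A → 1 - κ ≤ μ.real (thickening ε A)) :
    concFn μ ε ≤ κ := by
  rw [concFn, sub_le_comm]
  refine le_csInf ⟨_, Set.univ, MeasurableSet.univ, by norm_num, rfl⟩ ?_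
  rintro r ⟨A, hA, hμA, rfl⟩
  exact h A hA hμA

theorem sepDist_nonneg : 0 ≤ sepDist μ κ :=
  Real.sSup_nonneg fun _ hδ => hδ.1

theorem le_sepDist [IsProbabilityMeasure μ] (hκ : 0 < κ) {δ : ℝ} (hδ : 0 ≤ δ) {A B : Set X}
    (hA : MeasurableSet A) (hB : MeasurableSet B) (hμA : κ ≤ μ.real A) (hμB : κ ≤ μ.real B)
    (hAB : ∀ a ∈ A, ∀ b ∈ B, δ ≤ dist a b) : δ ≤ sepDist μ κ := by
  -- `sSup` of a set that is not bounded above is `0`; a bound comes from a ball of mass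
  -- `> 1 - κ`, which every set of mass `≥ κ` meets.
  obtain ⟨x, R, hR⟩ := exists_lt_measureReal_closedBall (μ := μ) (c := 1 - κ) (by linarith)
  refine le_csSup ⟨2 * R, ?_⟩ ⟨hδ, A, B, hA, hB, hμA, hμB, hAB⟩
  rintro δ' ⟨-, A', B', hA', hB', hμA', hμB', hAB'⟩
  rw [← measureReal_def] at hμA' hμB'
  obtain ⟨a, ha, haA⟩ :=
    nonempty_inter_of_one_lt_measureReal_add (μ := μ) (s := closedBall x R) hA' (by linarith)
  obtain ⟨b, hb, hbB⟩ :=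
    nonempty_inter_of_one_lt_measureReal_add (μ := μ) (s := closedBall x R) hB' (by linarith)
  calc δ' ≤ dist a b := hAB' a haA b hbB
    _ ≤ dist a x + dist b x := dist_triangle_right a b x
    _ ≤ 2 * R := by linarith [mem_closedBall.1 ha, mem_closedBall.1 hb]

theorem sepDist_le_of_forall_exists_dist_lt {c : ℝ} (hc : 0 ≤ c)
    (h : ∀ A B, MeasurableSet A → MeasurableSet B → κ ≤ μ.real A → κ ≤ μ.real B →
      ∃ a ∈ A, ∃ b ∈ B, dist a b < c) :
    sepDist μ κ ≤ c := by
  refine Real.sSup_le ?_ hc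
  rintro δ ⟨-, A, B, hA, hB, hμA, hμB, hAB⟩
  obtain ⟨a, ha, b, hb, hab⟩ := h A B hA hB hμA hμB
  exact (hAB a ha b hb).trans hab.le

variable [OpensMeasurableSpace X]

theorem concFn_le_of_sepDist_lt [IsProbabilityMeasure μ] (hκ : 0 < κ) (hκ2 : κ ≤ 1 / 2)
    (hε : 0 ≤ ε) (hsep : sepDist μ κ < ε) : concFn μ ε ≤ κ := by
  refine concFn_le_of_forall fun A hA hμA => ?_
  by_contra! hlt
  have hthick : MeasurableSet (thickening ε A) := isOpen_thickening.measurableSet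
  have hμB : κ ≤ μ.real (thickening ε A)ᶜ := by
    rw [probReal_compl_eq_one_sub hthick]
    linarith
  have hsep' := le_sepDist hκ hε hA hthick.compl (by linarith) hμB fun a ha b hb =>
    le_of_not_gt fun hab => hb (mem_thickening_iff.2 ⟨a, ha, by rwa [dist_comm]⟩)
  linarith

theorem half_le_measureReal_thickening_of_concFn_lt [IsProbabilityMeasure μ]
    (hconc : concFn μ ε < κ) {C : Set X} (hC : MeasurableSet C) (hμC : κ ≤ μ.real C) :
    1 / 2 ≤ μ.real (thickening ε C) := by
  by_contra! hlt
  have hthick : MeasurableSet (thickening ε C) := isOpen_thickening.measurableSet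
  have hμD : 1 / 2 ≤ μ.real (thickening ε C)ᶜ := by
    rw [probReal_compl_eq_one_sub hthick]
    linarith
  have hbig := one_sub_lt_measureReal_thickening hconc hthick.compl hμD
  have hsmall : μ.real (thickening ε (thickening ε C)ᶜ) ≤ μ.real Cᶜ :=
    measureReal_mono (thickening_compl_thickening_self_subset_compl ε C)
  rw [probReal_compl_eq_one_sub hC] at hsmall
  linarith

theorem sepDist_le_of_concFn_lt [IsProbabilityMeasure μ] (hε : 0 ≤ ε)
    (hconc : concFn μ ε < κ) : sepDist μ κ ≤ 2 * ε := by
  refine sepDist_le_of_forall_exists_dist_lt (by linarith) fun A B hA hB hμA hμB => ?_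
  have hA2 : 1 - κ < μ.real (thickening ε (thickening ε A)) :=
    one_sub_lt_measureReal_thickening hconc isOpen_thickening.measurableSet
      (half_le_measureReal_thickening_of_concFn_lt hconc hA hμA)
  obtain ⟨b, hbA, hbB⟩ := nonempty_inter_of_one_lt_measureReal_add hB (by linarith)
  obtain ⟨a, ha, hab⟩ := mem_thickening_iff.1 (thickening_thickening_subset ε ε A hbA)
  exact ⟨a, ha, b, hbB, by rwa [dist_comm, two_mul]⟩

end MMSpace

/-- A sequence of mm-spaces is a Lévy family (`α_{X_n}(ε) → 0` for every `ε > 0`)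
iff `sep_κ(X_n) → 0` for every `0 < κ ≤ 1/2`. -/
theorem stmt4 (X : ℕ → Type*) [∀ n, MetricSpace (X n)] [∀ n, MeasurableSpace (X n)]
    [∀ n, BorelSpace (X n)] (μ : ∀ n, Measure (X n)) [∀ n, IsProbabilityMeasure (μ n)] :
    (∀ ε : ℝ, 0 < ε → Tendsto (fun n => concFn (μ n) ε) atTop (nhds 0)) ↔
      (∀ κ : ℝ, 0 < κ → κ ≤ 1 / 2 →
        Tendsto (fun n => sepDist (μ n) κ) atTop (nhds 0)) := by
  constructor
  · intro hconc κ hκ _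
    refine tendsto_order.2 ⟨fun a ha => .of_forall fun n => ha.trans_le sepDist_nonneg,
      fun η hη => ?_⟩
    filter_upwards [(hconc (η / 3) (by positivity)).eventually_lt_const hκ] with n hn
    linarith [sepDist_le_of_concFn_lt (by positivity) hn]
  · intro hsep ε hε
    refine tendsto_order.2 ⟨fun a ha => .of_forall fun n => ha.trans_le concFn_nonneg,
      fun η hη => ?_⟩
    have hκ : 0 < min (η / 2) (1 / 2) := by positivity
    filter_upwards [(hsep _ hκ (min_le_right _ _)).eventually_lt_const hε] with n hn
    linarith [concFn_le_of_sepDist_lt hκ (min_le_right _ _) hε.le hn,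
      min_le_left (η / 2) (1 / 2)]
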